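/- Let G be a simple connected graph on n vertices with m edges, and suppose k ∈ ℝ is such that every eigenvalue λ of the normalized Laplacian 𝓛 other than the simple eigenvalue 0 satisfies k ≤ λ ≤ 2 − k (i.e., k ≤ λ_2(𝓛) ≤ ... ≤ λ_n(𝓛) ≤ 2 − k, where the eigenvalues are listed in nondecreasing order). Then for every vertex v_i of degree d_i, 𝓛E_G(v_i) ≤ 1 − k·(1 − d_i/(2m)). -/

import Mathlib

open Matrix BigOperators Finset

/-- The absolute value of a real matrix `B`, defined as `(B * Bᵀ)^(1/2)`. -/
noncomputable def matAbs {n : ℕ} (B : Matrix (Fin n) (Fin n) ℝ) : Matrix (Fin n) (Fin n) ℝ :=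
  let hA : (B * Bᵀ).PosSemidef := Matrix.conjTranspose_eq_transpose_of_trivial B ▸
    Matrix.posSemidef_self_mul_conjTranspose B
  (hA.1.eigenvectorUnitary : Matrix (Fin n) (Fin n) ℝ) *
    Matrix.diagonal ((↑) ∘ (Real.sqrt ·) ∘ hA.1.eigenvalues) *
    (star hA.1.eigenvectorUnitary : Matrix (Fin n) (Fin n) ℝ)

/-- The (adjacency) energy of the vertex `i` of the graph `G`: `|A|_{ii}`. -/
noncomputable def vertexEnergy {n : ℕ} (G : SimpleGraph (Fin n)) [DecidableRel G.Adj]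
    (i : Fin n) : ℝ :=
  matAbs (G.adjMatrix ℝ) i i

/-- The Laplacian energy of the vertex `i` of the graph `G`: `(|L - (2m/n) I|)_{ii}`. -/
noncomputable def vertexLapEnergy {n : ℕ} (G : SimpleGraph (Fin n)) [DecidableRel G.Adj]
    (i : Fin n) : ℝ :=
  matAbs (G.lapMatrix ℝ - ((2 * (G.edgeFinset.card : ℝ)) / n) • 1) i i

/-- The normalized Laplacian `𝓛 = I - D^{-1/2} A D^{-1/2}` of the graph `G`. -/
noncomputable def normLap {n : ℕ} (G : SimpleGraph (Fin n)) [DecidableRel G.Adj] :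
    Matrix (Fin n) (Fin n) ℝ :=
  1 - Matrix.diagonal (fun i => (Real.sqrt (G.degree i))⁻¹) * G.adjMatrix ℝ *
      Matrix.diagonal (fun i => (Real.sqrt (G.degree i))⁻¹)

/-- The normalized Laplacian energy of the vertex `i` of the graph `G`: `(|𝓛 - I|)_{ii}`. -/
noncomputable def vertexNormLapEnergy {n : ℕ} (G : SimpleGraph (Fin n)) [DecidableRel G.Adj]
    (i : Fin n) : ℝ :=
  matAbs (normLap G - 1) i i

/-!
Write `𝓛 = ∑ⱼ λⱼ vⱼ vⱼᵀ` with an orthonormal eigenbasis `(vⱼ)`. Then `|𝓛 - I| = ∑ⱼ |λⱼ - 1| vⱼ vⱼᵀ`,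
so its `(i, i)` entry is the average of the `|λⱼ - 1|` with weights `vⱼ(i)²`, which sum to `1`.
The eigenvalue `0` has value `1` and weight `dᵢ / 2m`, because for a connected graph its
eigenspace is spanned by `(√dⱼ)ⱼ`, a vector of squared norm `∑ⱼ dⱼ = 2m`. Every other eigenvalue
has value at most `1 - k`, so the entry is at most `dᵢ / 2m + (1 - k) (1 - dᵢ / 2m)`.
-/

lemma Matrix.mem_spectrum_of_mulVec_eq_smul {K ι : Type*} [Field K] [Fintype ι] [DecidableEq ι]
    {A : Matrix ι ι K} {t : K} {w : ι → K} (hw : w ≠ 0) (hAw : A *ᵥ w = t • w) :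
    t ∈ spectrum K A := by
  rw [← Matrix.spectrum_toLin']
  exact (Module.End.hasEigenvalue_of_hasEigenvector
    ⟨Module.End.mem_eigenspace_iff.2 (by rwa [Matrix.toLin'_apply]), hw⟩).mem_spectrum

namespace Matrix.IsHermitian

variable {ι : Type*} [Fintype ι] [DecidableEq ι] {A : Matrix ι ι ℝ} (hA : A.IsHermitian)

lemma cfc_apply_self (f : ℝ → ℝ) (i : ι) :
    cfc f A i i = ∑ j, f (hA.eigenvalues j) * hA.eigenvectorBasis j i ^ 2 := by
  rw [hA.cfc_eq, Matrix.IsHermitian.cfc, Unitary.conjStarAlgAut_apply, mul_apply]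
  simp [mul_diagonal, sq, mul_comm, mul_left_comm]

/-- The diagonal entry `(P_t)ᵢᵢ` of the orthogonal projection `P_t` onto the `t`-eigenspace. -/
noncomputable def eigenspaceWeight (t : ℝ) (i : ι) : ℝ :=
  ∑ j with hA.eigenvalues j = t, hA.eigenvectorBasis j i ^ 2

lemma sum_eigenvectorBasis_sq (i : ι) : ∑ j, hA.eigenvectorBasis j i ^ 2 = 1 := by
  simpa [cfc_const_one ℝ A] using (hA.cfc_apply_self (fun _ => 1) i).symm

lemma cfc_apply_self_le {f : ℝ → ℝ} {t a b : ℝ} (hft : f t ≤ a)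
    (hf : ∀ x ∈ spectrum ℝ A, x ≠ t → f x ≤ b) (i : ι) :
    cfc f A i i ≤ a * hA.eigenspaceWeight t i + b * (1 - hA.eigenspaceWeight t i) := by
  have hrest : 1 - hA.eigenspaceWeight t i =
      ∑ j with hA.eigenvalues j ≠ t, hA.eigenvectorBasis j i ^ 2 := by
    rw [← hA.sum_eigenvectorBasis_sq i, eigenspaceWeight,
      ← Finset.sum_filter_add_sum_filter_not _ (fun j => hA.eigenvalues j = t), add_sub_cancel_left]
  rw [hrest, hA.cfc_apply_self, eigenspaceWeight,
    ← Finset.sum_filter_add_sum_filter_not _ (fun j => hA.eigenvalues j = t),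
    Finset.mul_sum, Finset.mul_sum]
  gcongr with j hj j hj
  · rw [(Finset.mem_filter.1 hj).2]; exact hft
  · refine hf _ ?_ (Finset.mem_filter.1 hj).2
    rw [hA.spectrum_real_eq_range_eigenvalues]; exact Set.mem_range_self j

lemma sum_eigenvectorBasis_mul (j l : ι) :
    ∑ a, hA.eigenvectorBasis j a * hA.eigenvectorBasis l a = if j = l then 1 else 0 := by
  simpa [PiLp.inner_apply, mul_comm, eq_comm] using
    orthonormal_iff_ite.mp hA.eigenvectorBasis.orthonormal j l

lemma eigenspaceWeight_eq_of_forall_eigenvector {t : ℝ} {w : ι → ℝ} (hw : w ≠ 0)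
    (hAw : A *ᵥ w = t • w) (hspan : ∀ x, A *ᵥ x = t • x → ∃ c : ℝ, x = c • w) (i : ι) :
    hA.eigenspaceWeight t i = w i ^ 2 / ∑ a, w a ^ 2 := by
  set S := ∑ a, w a ^ 2
  have hcoef : ∀ j, hA.eigenvalues j = t →
      ∃ c, ⇑(hA.eigenvectorBasis j) = c • w ∧ c ^ 2 * S = 1 := by
    intro j hj
    obtain ⟨c, hc⟩ := hspan _ (hj ▸ hA.mulVec_eigenvectorBasis j)
    refine ⟨c, hc, ?_⟩
    have := hA.sum_eigenvectorBasis_mul j j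
    simp only [if_true, hc, Pi.smul_apply, smul_eq_mul] at this
    rw [← this, Finset.mul_sum]
    exact Finset.sum_congr rfl fun a _ => by ring
  obtain ⟨j₀, hj₀⟩ : ∃ j₀, hA.eigenvalues j₀ = t := by
    rw [← Set.mem_range, ← hA.spectrum_real_eq_range_eigenvalues]
    exact mem_spectrum_of_mulVec_eq_smul hw hAw
  obtain ⟨c₀, hc₀, hS₀⟩ := hcoef j₀ hj₀
  -- two eigenvectors for `t` are both multiples of `w`, so they cannot be orthogonal
  have hunique : ({j | hA.eigenvalues j = t} : Finset ι) = {j₀} := by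
    ext j
    simp only [Finset.mem_filter, Finset.mem_univ, true_and, Finset.mem_singleton]
    refine ⟨fun hj => ?_, fun h => h ▸ hj₀⟩
    by_contra hne
    obtain ⟨c, hc, hS⟩ := hcoef j hj
    have horth := hA.sum_eigenvectorBasis_mul j j₀
    simp only [if_neg hne, hc, hc₀, Pi.smul_apply, smul_eq_mul] at horth
    have h : c * c₀ * S = 0 := by
      rw [← horth, Finset.mul_sum]
      exact Finset.sum_congr rfl fun a _ => by ring
    exact one_ne_zero
      (by linear_combination (-(c₀ ^ 2 * S)) * hS - hS₀ + (c * c₀ * S) * h : (1 : ℝ) = 0)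
  rw [eigenspaceWeight, hunique, Finset.sum_singleton, hc₀, Pi.smul_apply, smul_eq_mul]
  have hS : S ≠ 0 := fun h => by simp [h] at hS₀
  field_simp
  linear_combination w i ^ 2 * hS₀

end Matrix.IsHermitian

lemma matAbs_eq_cfc_sqrt {n : ℕ} (B : Matrix (Fin n) (Fin n) ℝ) :
    matAbs B = cfc Real.sqrt (B * Bᵀ) := by
  rw [Matrix.IsHermitian.cfc_eq]
  rfl

lemma matAbs_cfc {n : ℕ} {A : Matrix (Fin n) (Fin n) ℝ} (hA : A.IsHermitian) (f : ℝ → ℝ) :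
    matAbs (cfc f A) = cfc (fun x => |f x|) A := by
  have hfin := A.finite_real_spectrum
  have hsym : (cfc f A)ᵀ = cfc f A := by
    rw [← conjTranspose_eq_transpose_of_trivial]; exact (cfc_predicate f A).star_eq
  rw [matAbs_eq_cfc_sqrt, hsym, ← cfc_mul f f A (hfin.continuousOn _) (hfin.continuousOn _),
    ← cfc_comp Real.sqrt (fun x => f x * f x) A (hf := hfin.continuousOn _)]
  simp only [Function.comp_def, Real.sqrt_mul_self_eq_abs]

section NormLap

variable {n : ℕ} (G : SimpleGraph (Fin n)) [DecidableRel G.Adj]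

lemma isHermitian_normLap : (normLap G).IsHermitian := by
  rw [normLap, Matrix.IsHermitian, Matrix.conjTranspose_eq_transpose_of_trivial]
  simp [Matrix.transpose_mul, Matrix.mul_assoc]

lemma normLap_eq_one_of_subsingleton [Subsingleton (Fin n)] : normLap G = 1 := by
  have hA : G.adjMatrix ℝ = 0 := by
    ext a b
    simp [SimpleGraph.adjMatrix_apply, Subsingleton.elim a b]
  simp [normLap, hA]

lemma normLap_eq_conj_lapMatrix (hG : ∀ i, 0 < G.degree i) :
    normLap G = Matrix.diagonal (fun i => (√(G.degree i))⁻¹) * G.lapMatrix ℝ *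
      Matrix.diagonal (fun i => (√(G.degree i))⁻¹) := by
  rw [SimpleGraph.lapMatrix, SimpleGraph.degMatrix, Matrix.mul_sub, Matrix.sub_mul,
    Matrix.diagonal_mul_diagonal, Matrix.diagonal_mul_diagonal, normLap, ← Matrix.diagonal_one]
  congr 3
  funext i
  have hd : (0 : ℝ) < G.degree i := by exact_mod_cast hG i
  have hs := Real.sq_sqrt hd.le
  field_simp
  exact hs

lemma normLap_mulVec_eq_zero_iff [Nontrivial (Fin n)] (hconn : G.Connected) {x : Fin n → ℝ} :
    normLap G *ᵥ x = 0 ↔ ∃ c : ℝ, x = c • fun i => √(G.degree i) := by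
  have hr : ∀ i, 0 < √(G.degree i) := fun i =>
    Real.sqrt_pos.2 (by exact_mod_cast hconn.preconnected.degree_pos_of_nontrivial i)
  have hdiag : ∀ v : Fin n → ℝ, Matrix.diagonal (fun i => (√(G.degree i))⁻¹) *ᵥ v = 0 ↔ v = 0 :=
    fun v => by simp [funext_iff, Matrix.mulVec_diagonal, (hr _).ne']
  set y : Fin n → ℝ := fun i => (√(G.degree i))⁻¹ * x i
  rw [normLap_eq_conj_lapMatrix G fun i => hconn.preconnected.degree_pos_of_nontrivial i,
    ← Matrix.mulVec_mulVec, ← Matrix.mulVec_mulVec, hdiag,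
    show Matrix.diagonal (fun i => (√(G.degree i))⁻¹) *ᵥ x = y from
      funext fun i => Matrix.mulVec_diagonal _ _ i,
    SimpleGraph.lapMatrix_mulVec_eq_zero_iff_forall_reachable]
  constructor
  · intro h
    obtain ⟨i₀⟩ := (inferInstance : Nonempty (Fin n))
    refine ⟨y i₀, funext fun i => ?_⟩
    rw [← h i i₀ (hconn i i₀), Pi.smul_apply, smul_eq_mul, mul_comm,
      mul_inv_cancel_left₀ (hr i).ne']
  · rintro ⟨c, rfl⟩ i j _
    simp only [y, Pi.smul_apply, smul_eq_mul, mul_left_comm _ c, inv_mul_cancel₀ (hr _).ne']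

lemma eigenspaceWeight_normLap_zero (hconn : G.Connected) (i : Fin n) :
    (isHermitian_normLap G).eigenspaceWeight 0 i =
      G.degree i / (2 * (G.edgeFinset.card : ℝ)) := by
  rcases subsingleton_or_nontrivial (Fin n) with _ | _
  · -- a single vertex: `𝓛 = 1`, and `dᵢ = 0` makes the right side `0 / 0 = 0`
    have hL := isHermitian_normLap G
    have : Nonempty (Fin n) := ⟨i⟩
    have hspec : spectrum ℝ (normLap G) = {1} := by
      rw [normLap_eq_one_of_subsingleton, spectrum.one_eq]
    have hne : ∀ j, hL.eigenvalues j ≠ 0 := fun j h => by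
      have hj := hL.spectrum_real_eq_range_eigenvalues ▸ Set.mem_range_self j
      rw [hspec, h] at hj
      exact zero_ne_one hj
    simp [Matrix.IsHermitian.eigenspaceWeight, hne]
  · set w : Fin n → ℝ := fun i => √(G.degree i)
    have hw : w ≠ 0 := fun h => by
      simpa [w, hconn.preconnected.degree_pos_of_nontrivial i |>.ne'] using congrFun h i
    have hLw : normLap G *ᵥ w = (0 : ℝ) • w := by
      rw [zero_smul, normLap_mulVec_eq_zero_iff G hconn]
      exact ⟨1, (one_smul _ _).symm⟩
    rw [(isHermitian_normLap G).eigenspaceWeight_eq_of_forall_eigenvector hw hLw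
      (fun x hx => (normLap_mulVec_eq_zero_iff G hconn).1 (by rwa [zero_smul] at hx))]
    simp only [w, Real.sq_sqrt (Nat.cast_nonneg _)]
    rw [← Nat.cast_sum, G.sum_degrees_eq_twice_card_edges, Nat.cast_mul, Nat.cast_ofNat]

end NormLap

theorem stmt18 {n : ℕ} (G : SimpleGraph (Fin n)) [DecidableRel G.Adj]
    (hconn : G.Connected) (k : ℝ)
    (hk : ∀ μ ∈ spectrum ℝ (normLap G), μ ≠ 0 → k ≤ μ ∧ μ ≤ 2 - k) (i : Fin n) :
    vertexNormLapEnergy G i ≤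
      1 - k * (1 - (G.degree i : ℝ) / (2 * (G.edgeFinset.card : ℝ))) := by
  have hL := isHermitian_normLap G
  have hshift : normLap G - 1 = cfc (fun x : ℝ => x - 1) (normLap G) := by
    rw [cfc_sub .., cfc_id' .., cfc_const_one ..]
  calc vertexNormLapEnergy G i = cfc (fun x : ℝ => |x - 1|) (normLap G) i i := by
        rw [vertexNormLapEnergy, hshift, matAbs_cfc hL]
    _ ≤ 1 * hL.eigenspaceWeight 0 i + (1 - k) * (1 - hL.eigenspaceWeight 0 i) :=
        hL.cfc_apply_self_le (by norm_num) (fun μ hμ hμ0 =>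
          abs_sub_le_iff.2 ⟨by linarith [hk μ hμ hμ0], by linarith [hk μ hμ hμ0]⟩) i
    _ = _ := by rw [eigenspaceWeight_normLap_zero G hconn i]; ring
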